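/- arXiv:math/0507386 — 5 statements merged into one kernel-verified Lean document; each statement's English description precedes it below -/
import Mathlib

section
/- Let Ω ⊆ ℂ be open and connected, and let λ, u, h, H : Ω → ℝ and p : Ω → ℂ be smooth with λ > 0. Assume H is constant, and that the equations h_{z z̄} = (λH/2)·u and 2 p_{z̄} = λ·(−u h_z) hold on Ω (Wirtinger derivatives, where h_z denotes the z-Wirtinger derivative of the real function h). Then the function Q := 2Hp + h_z² satisfies Q_{z̄} = 0 on Ω, i.e. Q is holomorphic. -/
/-- Wirtinger derivative ∂/∂z. -/
noncomputable def wz (f : ℂ → ℂ) (z : ℂ) : ℂ :=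
  (fderiv ℝ f z 1 - Complex.I * fderiv ℝ f z Complex.I) / 2

/-- Wirtinger derivative ∂/∂z̄. -/
noncomputable def wzb (f : ℂ → ℂ) (z : ℂ) : ℂ :=
  (fderiv ℝ f z 1 + Complex.I * fderiv ℝ f z Complex.I) / 2

lemma wzb_congr {f g : ℂ → ℂ} {z : ℂ} (hfg : f =ᶠ[nhds z] g) : wzb f z = wzb g z := by
  unfold wzb; rw [hfg.fderiv_eq]

lemma wzb_add {f g : ℂ → ℂ} {z : ℂ} (hf : DifferentiableAt ℝ f z)
    (hg : DifferentiableAt ℝ g z) :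
    wzb (fun w => f w + g w) z = wzb f z + wzb g z := by
  unfold wzb
  rw [fderiv_fun_add hf hg]
  simp only [ContinuousLinearMap.add_apply]
  ring

lemma wzb_mul {f g : ℂ → ℂ} {z : ℂ} (hf : DifferentiableAt ℝ f z)
    (hg : DifferentiableAt ℝ g z) :
    wzb (fun w => f w * g w) z = wzb f z * g z + f z * wzb g z := by
  unfold wzb
  rw [fderiv_fun_mul hf hg]
  simp only [ContinuousLinearMap.add_apply, ContinuousLinearMap.smul_apply, smul_eq_mul]
  ring

lemma wzb_const_mul {f : ℂ → ℂ} {z : ℂ} (c : ℂ) (hf : DifferentiableAt ℝ f z) :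
    wzb (fun w => c * f w) z = c * wzb f z := by
  unfold wzb
  rw [fderiv_const_mul hf]
  simp only [ContinuousLinearMap.smul_apply, smul_eq_mul]
  ring

/-- `wz f` is differentiable at interior points where `f` is smooth. -/
lemma wz_differentiableAt {f : ℂ → ℂ} {Ω : Set ℂ} (hΩ : IsOpen Ω)
    (hf : ContDiffOn ℝ (⊤ : ℕ∞) f Ω) {z : ℂ} (hz : z ∈ Ω) :
    DifferentiableAt ℝ (wz f) z := by
  have hfa : ContDiffAt ℝ (⊤ : ℕ∞) f z := hf.contDiffAt (hΩ.mem_nhds hz)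
  have hd : ContDiffAt ℝ 1 (fderiv ℝ f) z := hfa.fderiv_right (WithTop.coe_le_coe.mpr le_top)
  have hd' : DifferentiableAt ℝ (fderiv ℝ f) z := hd.differentiableAt one_ne_zero
  have h1 : DifferentiableAt ℝ (fun w => fderiv ℝ f w 1) z :=
    hd'.clm_apply (differentiableAt_const _)
  have hI : DifferentiableAt ℝ (fun w => fderiv ℝ f w Complex.I) z :=
    hd'.clm_apply (differentiableAt_const _)
  unfold wz
  simpa [div_eq_mul_inv] using
    (h1.fun_sub ((differentiableAt_const _).fun_mul hI)).fun_mul (differentiableAt_const ((2:ℂ)⁻¹))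

/-- Abresch–Rosenberg: if on an open connected `Ω` the smooth data `λ > 0`, `u`, `h`, constant
`H`, `p` satisfy `h_{z z̄} = (λH/2)u` and the Codazzi equation `2p_{z̄} = λ(−u h_z)`, then
`Q := 2Hp + h_z²` is holomorphic, i.e. `Q_{z̄} = 0` on `Ω`. -/
theorem stmt6 (Ω : Set ℂ) (hΩ : IsOpen Ω) (hconn : IsConnected Ω)
    (lam u h H : ℂ → ℝ) (p : ℂ → ℂ)
    (hlam : ContDiffOn ℝ (⊤ : ℕ∞) lam Ω) (hu : ContDiffOn ℝ (⊤ : ℕ∞) u Ω)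
    (hh : ContDiffOn ℝ (⊤ : ℕ∞) h Ω) (hH : ContDiffOn ℝ (⊤ : ℕ∞) H Ω)
    (hp : ContDiffOn ℝ (⊤ : ℕ∞) p Ω)
    (hlampos : ∀ z ∈ Ω, 0 < lam z)
    (hHconst : ∃ c : ℝ, ∀ z ∈ Ω, H z = c)
    (hC2 : ∀ z ∈ Ω, wzb (fun w => wz (fun v => ((h v : ℝ) : ℂ)) w) z
      = ((lam z * H z / 2 * u z : ℝ) : ℂ))
    (hCodazzi : ∀ z ∈ Ω, 2 * wzb p z
      = (lam z : ℂ) * (-(u z : ℂ) * wz (fun v => ((h v : ℝ) : ℂ)) z)) :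
    ∀ z ∈ Ω,
      wzb (fun w => 2 * (H w : ℂ) * p w + (wz (fun v => ((h v : ℝ) : ℂ)) w)^2) z = 0 := by
  obtain ⟨c, hc⟩ := hHconst
  intro z hz
  set g : ℂ → ℂ := wz (fun v => ((h v : ℝ) : ℂ)) with hg
  -- smoothness of the complexified h
  have hF : ContDiffOn ℝ (⊤ : ℕ∞) (fun v => ((h v : ℝ) : ℂ)) Ω :=
    Complex.ofRealCLM.contDiff.comp_contDiffOn hh
  have hgdiff : DifferentiableAt ℝ g z := wz_differentiableAt hΩ hF hz
  have hpdiff : DifferentiableAt ℝ p z :=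
    ((hp.contDiffAt (hΩ.mem_nhds hz)).differentiableAt (by simp))
  -- rewrite the function eventually near z
  have hev : (fun w => 2 * (H w : ℂ) * p w + (g w)^2)
      =ᶠ[nhds z] (fun w => (2 * (c : ℂ)) * p w + g w * g w) := by
    filter_upwards [hΩ.mem_nhds hz] with w hw
    rw [hc w hw, sq]
  rw [wzb_congr hev]
  rw [wzb_add ((differentiableAt_const _).fun_mul hpdiff) (hgdiff.fun_mul hgdiff),
    wzb_const_mul _ hpdiff, wzb_mul hgdiff hgdiff]
  have h1 : wzb g z = ((lam z * c / 2 * u z : ℝ) : ℂ) := by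
    have := hC2 z hz
    rwa [hc z hz] at this
  have h2 : wzb p z = (lam z : ℂ) * (-(u z : ℂ) * g z) / 2 := by
    have h3 := hCodazzi z hz
    linear_combination h3 / 2
  rw [h1, h2]
  push_cast
  ring
end

section
/- Conversely, every solution h : ℝ² → ℝ of the system h_{ss} = √(1 + h_s² + h_t²), h_{st} = 0, h_{tt} = 0 is of the form h(s,t) = √(1+y²)·cosh(s+s₀) + y·t + c for some real constants y, s₀, c. -/
/-- Every smooth solution `h : ℝ² → ℝ` of the system `h_{ss} = √(1 + h_s² + h_t²)`,
`h_{st} = 0`, `h_{tt} = 0` has the form `h(s,t) = √(1+y²)·cosh(s+s₀) + y·t + c`. -/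
theorem stmt8 (h : ℝ → ℝ → ℝ)
    (hsm : ContDiff ℝ (⊤ : ℕ∞) (fun q : ℝ × ℝ => h q.1 q.2))
    (heq : ∀ s t : ℝ,
      deriv (fun x => deriv (fun x' => h x' t) x) s
        = Real.sqrt (1 + (deriv (fun x' => h x' t) s)^2 + (deriv (fun t' => h s t') t)^2) ∧
      deriv (fun t' => deriv (fun x' => h x' t') s) t = 0 ∧
      deriv (fun t' => deriv (fun t'' => h s t'') t') t = 0) :
    ∃ y s₀ c : ℝ, ∀ s t : ℝ,
      h s t = Real.sqrt (1 + y^2) * Real.cosh (s + s₀) + y * t + c := by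
  set H : ℝ × ℝ → ℝ := fun q => h q.1 q.2 with hHdef
  have hFd : ContDiff ℝ (⊤ : ℕ∞) (fderiv ℝ H) := hsm.fderiv_right (by simp)
  set F1 : ℝ × ℝ → ℝ := fun p => fderiv ℝ H p (1, 0) with hF1def
  set F2 : ℝ × ℝ → ℝ := fun p => fderiv ℝ H p (0, 1) with hF2def
  have hF1 : ContDiff ℝ (⊤ : ℕ∞) F1 := hFd.clm_apply contDiff_const
  have hF2 : ContDiff ℝ (⊤ : ℕ∞) F2 := hFd.clm_apply contDiff_const
  have hd1 : ∀ s t : ℝ, HasDerivAt (fun x => h x t) (F1 (s, t)) s := by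
    intro s t
    have hH : HasFDerivAt H (fderiv ℝ H (s, t)) (s, t) :=
      (hsm.differentiable (by simp) (s, t)).hasFDerivAt
    exact hH.comp_hasDerivAt s ((hasDerivAt_id s).prodMk (hasDerivAt_const s t))
  have hd2 : ∀ s t : ℝ, HasDerivAt (fun t' => h s t') (F2 (s, t)) t := by
    intro s t
    have hH : HasFDerivAt H (fderiv ℝ H (s, t)) (s, t) :=
      (hsm.differentiable (by simp) (s, t)).hasFDerivAt
    exact hH.comp_hasDerivAt t ((hasDerivAt_const t s).prodMk (hasDerivAt_id t))
  have hderiv1 : ∀ s t : ℝ, deriv (fun x => h x t) s = F1 (s, t) := fun s t => (hd1 s t).deriv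
  have hderiv2 : ∀ s t : ℝ, deriv (fun t' => h s t') t = F2 (s, t) := fun s t => (hd2 s t).deriv
  -- F1 and F2 are constant in t
  have hF1const : ∀ s t : ℝ, F1 (s, t) = F1 (s, 0) := by
    intro s t
    have hdiff : Differentiable ℝ (fun t' : ℝ => F1 (s, t')) :=
      (hF1.comp (ContDiff.prodMk contDiff_const contDiff_id)).differentiable (by simp)
    have hzero : ∀ t' : ℝ, deriv (fun t' : ℝ => F1 (s, t')) t' = 0 := by
      intro t'
      have := (heq s t').2.1
      simpa only [funext fun t'' => hderiv1 s t''] using this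
    exact is_const_of_deriv_eq_zero hdiff hzero t 0
  have hF2const : ∀ s t : ℝ, F2 (s, t) = F2 (s, 0) := by
    intro s t
    have hdiff : Differentiable ℝ (fun t' : ℝ => F2 (s, t')) :=
      (hF2.comp (ContDiff.prodMk contDiff_const contDiff_id)).differentiable (by simp)
    have hzero : ∀ t' : ℝ, deriv (fun t' : ℝ => F2 (s, t')) t' = 0 := by
      intro t'
      have := (heq s t').2.2
      simpa only [funext fun t'' => hderiv2 s t''] using this
    exact is_const_of_deriv_eq_zero hdiff hzero t 0
  set g : ℝ → ℝ := fun s => F2 (s, 0) with hgdef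
  set ψ : ℝ → ℝ := fun s => F1 (s, 0) with hψdef
  have hgsmooth : ContDiff ℝ (⊤ : ℕ∞) g := hF2.comp (ContDiff.prodMk contDiff_id contDiff_const)
  have hψsmooth : ContDiff ℝ (⊤ : ℕ∞) ψ := hF1.comp (ContDiff.prodMk contDiff_id contDiff_const)
  -- h is affine in t : h s t = h s 0 + g s * t
  have hlin : ∀ s t : ℝ, h s t = h s 0 + g s * t := by
    intro s t
    have hk : ∀ t' : ℝ, HasDerivAt (fun t'' => h s t'' - g s * t'') 0 t' := by
      intro t'
      have h1 : HasDerivAt (fun t'' => h s t'') (g s) t' := by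
        have := hd2 s t'
        rwa [hF2const s t'] at this
      have := h1.sub ((hasDerivAt_id t').const_mul (g s))
      rw [show g s - g s * 1 = 0 by ring] at this
      exact this
    have hc := is_const_of_deriv_eq_zero (fun t' => (hk t').differentiableAt)
      (fun t' => (hk t').deriv) t 0
    simp only [mul_zero, sub_zero] at hc
    linarith [hc]
  -- g is constant
  have hgconst : ∀ s : ℝ, g s = g 0 := by
    have hg' : ∀ s : ℝ, deriv g s = 0 := by
      intro s
      have h1 : HasDerivAt (fun x => h x 0 + g x * 1) (ψ s + deriv g s * 1) s :=
        (hd1 s 0).add (((hgsmooth.differentiable (by simp) s).hasDerivAt).mul_const 1)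
      have h2 : (fun x => h x 0 + g x * 1) = fun x => h x 1 := by
        funext x; rw [hlin x 1]
      rw [h2] at h1
      have h3 : F1 (s, 1) = ψ s + deriv g s * 1 := by
        rw [← (hd1 s 1).deriv, h1.deriv]
      rw [hF1const s 1] at h3
      have : ψ s = ψ s + deriv g s * 1 := h3
      linarith
    intro s
    exact is_const_of_deriv_eq_zero (hgsmooth.differentiable (by simp)) hg' s 0
  set y : ℝ := g 0 with hydef
  set a : ℝ := Real.sqrt (1 + y ^ 2) with hadef
  have ha2 : a ^ 2 = 1 + y ^ 2 := Real.sq_sqrt (by positivity)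
  have hapos : 0 < a := Real.sqrt_pos.2 (by positivity)
  -- the ODE for ψ
  have hψ' : ∀ s : ℝ, HasDerivAt ψ (Real.sqrt (a ^ 2 + ψ s ^ 2)) s := by
    intro s
    have h1 := (heq s 0).1
    have h2 : (fun x => deriv (fun x' => h x' 0) x) = ψ := by
      funext x; exact hderiv1 x 0
    rw [h2, hderiv1 s 0, hderiv2 s 0] at h1
    have h3 : F2 (s, 0) = y := hgconst s
    rw [h3] at h1
    have h4 : (1 : ℝ) + ψ s ^ 2 + y ^ 2 = a ^ 2 + ψ s ^ 2 := by rw [ha2]; ring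
    rw [h4] at h1
    have := (hψsmooth.differentiable (by simp) s).hasDerivAt
    rwa [h1] at this
  -- integrate: ψ s = a * sinh (s + s₀)
  have hXpos : ∀ s : ℝ, 0 < a ^ 2 + ψ s ^ 2 := fun s => by positivity
  set u : ℝ → ℝ := fun s => Real.arsinh (ψ s / a) with hudef
  have hu' : ∀ s : ℝ, HasDerivAt u 1 s := by
    intro s
    have h1 : HasDerivAt (fun s' => ψ s' / a) (Real.sqrt (a ^ 2 + ψ s ^ 2) / a) s :=
      (hψ' s).div_const a
    have h2 := (Real.hasDerivAt_arsinh (ψ s / a)).comp s h1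
    have h3 : Real.sqrt (1 + (ψ s / a) ^ 2) = Real.sqrt (a ^ 2 + ψ s ^ 2) / a := by
      rw [eq_div_iff (ne_of_gt hapos), ← Real.sqrt_sq hapos.le (x := a), ← Real.sqrt_mul
        (by positivity)]
      congr 1
      field_simp
      simp only [Real.sq_sqrt (sq_nonneg a), Real.sq_sqrt (show (0:ℝ) ≤ 1 + y ^ 2 by positivity)]
    rw [h3] at h2
    have h4 : (Real.sqrt (a ^ 2 + ψ s ^ 2) / a)⁻¹ * (Real.sqrt (a ^ 2 + ψ s ^ 2) / a) = 1 :=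
      inv_mul_cancel₀ (div_ne_zero (ne_of_gt (Real.sqrt_pos.2 (hXpos s))) (ne_of_gt hapos))
    rw [h4] at h2
    exact h2
  have huval : ∀ s : ℝ, u s = s + u 0 := by
    intro s
    have hk : ∀ s' : ℝ, HasDerivAt (fun x => u x - x) 0 s' := by
      intro s'
      have := (hu' s').sub (hasDerivAt_id s')
      rw [show (1:ℝ) - 1 = 0 by ring] at this
      exact this
    have := is_const_of_deriv_eq_zero (fun s' => (hk s').differentiableAt)
      (fun s' => (hk s').deriv) s 0
    simp at this
    linarith
  set s₀ : ℝ := u 0 with hs₀def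
  have hψval : ∀ s : ℝ, ψ s = a * Real.sinh (s + s₀) := by
    intro s
    have h1 : Real.sinh (u s) = ψ s / a := Real.sinh_arsinh _
    rw [huval s] at h1
    field_simp at h1
    linarith
  -- integrate again
  set c : ℝ := h 0 0 - a * Real.cosh s₀ with hcdef
  have hφval : ∀ s : ℝ, h s 0 = a * Real.cosh (s + s₀) + c := by
    intro s
    have hk : ∀ s' : ℝ, HasDerivAt (fun x => h x 0 - a * Real.cosh (x + s₀)) 0 s' := by
      intro s'
      have h1 : HasDerivAt (fun x : ℝ => a * Real.cosh (x + s₀))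
          (a * Real.sinh (s' + s₀)) s' := by
        have := (((hasDerivAt_id s').add_const s₀).cosh).const_mul a
        simpa [mul_comm] using this
      have h2 : HasDerivAt (fun x => h x 0) (ψ s') s' := hd1 s' 0
      have := h2.sub h1
      rwa [hψval s', sub_self] at this
    have := is_const_of_deriv_eq_zero (fun s' => (hk s').differentiableAt)
      (fun s' => (hk s').deriv) s 0
    simp only [zero_add] at this
    rw [hcdef]
    linarith
  refine ⟨y, s₀, c, fun s t => ?_⟩
  rw [hlin s t, hφval s, hgconst s, hadef]
  ring
end

section
/- Equip ℝ³ with the Lorentzian bilinear form ⟨·,·⟩ of signature (−,+,+). Let Ω ⊆ ℂ be open and G : Ω → ℝ³ a smooth map with ⟨G,G⟩ ≡ −1 on Ω. If G is harmonic in the hyperboloid sense, i.e. the mixed Wirtinger derivative G_{z z̄} is pointwise proportional to G, then the complex-valued function Q₀ := ⟨G_z, G_z⟩ (the bilinear form applied to the complexified derivative) is holomorphic on Ω, i.e. (Q₀)_{z̄} = 0. -/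
/-- Componentwise Wirtinger derivative ∂/∂z for ℂ³-valued maps. -/
noncomputable def wzV (f : ℂ → Fin 3 → ℂ) (z : ℂ) : Fin 3 → ℂ :=
  fun i => wz (fun w => f w i) z

/-- Componentwise Wirtinger derivative ∂/∂z̄ for ℂ³-valued maps. -/
noncomputable def wzbV (f : ℂ → Fin 3 → ℂ) (z : ℂ) : Fin 3 → ℂ :=
  fun i => wzb (fun w => f w i) z

/-- ℂ-bilinear extension of the Lorentzian form of signature (−,+,+). -/
def lor3c (x y : Fin 3 → ℂ) : ℂ := -(x 0 * y 0) + x 1 * y 1 + x 2 * y 2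

lemma wz_congr {f g : ℂ → ℂ} {z : ℂ} (h : f =ᶠ[nhds z] g) : wz f z = wz g z := by
  unfold wz; rw [h.fderiv_eq]

lemma wz_const (c : ℂ) (z : ℂ) : wz (fun _ => c) z = 0 := by
  unfold wz; simp

lemma wz_mul {f g : ℂ → ℂ} {z : ℂ} (hf : DifferentiableAt ℝ f z)
    (hg : DifferentiableAt ℝ g z) :
    wz (fun w => f w * g w) z = wz f z * g z + f z * wz g z := by
  unfold wz
  rw [fderiv_fun_mul hf hg]
  simp only [ContinuousLinearMap.add_apply, ContinuousLinearMap.smul_apply, smul_eq_mul]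
  ring

lemma wz_add {f g : ℂ → ℂ} {z : ℂ} (hf : DifferentiableAt ℝ f z)
    (hg : DifferentiableAt ℝ g z) :
    wz (fun w => f w + g w) z = wz f z + wz g z := by
  unfold wz
  rw [fderiv_fun_add hf hg]
  simp only [ContinuousLinearMap.add_apply]
  ring

lemma wz_neg {f : ℂ → ℂ} {z : ℂ} : wz (fun w => -f w) z = -wz f z := by
  unfold wz
  rw [fderiv_fun_neg]
  simp only [ContinuousLinearMap.neg_apply]
  ring

lemma wzb_neg {f : ℂ → ℂ} {z : ℂ} : wzb (fun w => -f w) z = -wzb f z := by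
  unfold wzb
  rw [fderiv_fun_neg]
  simp only [ContinuousLinearMap.neg_apply]
  ring

/-- Holomorphicity of the Hopf differential: if a smooth map `G : Ω → ℝ³` with `⟨G,G⟩ ≡ −1`
is harmonic in the hyperboloid sense (`G_{z z̄}` pointwise proportional to `G`), then
`Q₀ := ⟨G_z, G_z⟩` is holomorphic on `Ω`. -/
theorem stmt11 (Ω : Set ℂ) (hΩ : IsOpen Ω) (G : ℂ → (Fin 3 → ℝ))
    (hsm : ContDiffOn ℝ (⊤ : ℕ∞) G Ω)
    (hhyp : ∀ z ∈ Ω, lor3c (fun i => ((G z i : ℝ) : ℂ)) (fun i => ((G z i : ℝ) : ℂ)) = -1)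
    (hharm : ∀ z ∈ Ω, ∃ f : ℂ,
      wzbV (fun w => wzV (fun v i => ((G v i : ℝ) : ℂ)) w) z = fun i => f * ((G z i : ℝ) : ℂ)) :
    ∀ z ∈ Ω,
      wzb (fun w => lor3c (wzV (fun v i => ((G v i : ℝ) : ℂ)) w)
        (wzV (fun v i => ((G v i : ℝ) : ℂ)) w)) z = 0 := by
  intro z hz
  set Gc : Fin 3 → ℂ → ℂ := fun i v => ((G v i : ℝ) : ℂ) with hGcdef
  -- smoothness of components
  have hGci : ∀ i, ContDiffAt ℝ (⊤ : ℕ∞) (Gc i) z := by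
    intro i
    have hG : ContDiffAt ℝ (⊤ : ℕ∞) G z := hsm.contDiffAt (hΩ.mem_nhds hz)
    exact Complex.ofRealCLM.contDiff.contDiffAt.comp z ((contDiffAt_pi.mp hG) i)
  have hGdiff : ∀ i, DifferentiableAt ℝ (Gc i) z :=
    fun i => (hGci i).differentiableAt (by simp)
  -- the Wirtinger z-derivative functions
  set h : Fin 3 → ℂ → ℂ := fun i w => wz (Gc i) w with hhdef
  have hdiff : ∀ i, DifferentiableAt ℝ (h i) z := by
    intro i
    have hF : ContDiffAt ℝ 1 (fderiv ℝ (Gc i)) z := (hGci i).fderiv_right (by exact WithTop.coe_le_coe.mpr le_top)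
    have hF' : DifferentiableAt ℝ (fderiv ℝ (Gc i)) z := hF.differentiableAt (by simp)
    have h1 : DifferentiableAt ℝ (fun w => fderiv ℝ (Gc i) w 1) z :=
      hF'.clm_apply (differentiableAt_const _)
    have h2 : DifferentiableAt ℝ (fun w => fderiv ℝ (Gc i) w Complex.I) z :=
      hF'.clm_apply (differentiableAt_const _)
    show DifferentiableAt ℝ (fun w =>
      (fderiv ℝ (Gc i) w 1 - Complex.I * fderiv ℝ (Gc i) w Complex.I) / 2) z
    have h3 : DifferentiableAt ℝ (fun w =>
        fderiv ℝ (Gc i) w 1 - Complex.I * fderiv ℝ (Gc i) w Complex.I) z :=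
      h1.sub (h2.const_mul Complex.I)
    simpa only [div_eq_mul_inv] using h3.mul_const ((2:ℂ)⁻¹)
  -- harmonicity
  obtain ⟨f, hf⟩ := hharm z hz
  have hfi : ∀ i, wzb (h i) z = f * Gc i z := fun i => congrFun hf i
  -- ⟨G, G_z⟩ = 0
  have horth : -(Gc 0 z * wz (Gc 0) z) + Gc 1 z * wz (Gc 1) z + Gc 2 z * wz (Gc 2) z = 0 := by
    have hP : wz (fun w => lor3c (fun i => Gc i w) (fun i => Gc i w)) z = 0 := by
      have heq : (fun w => lor3c (fun i => Gc i w) (fun i => Gc i w)) =ᶠ[nhds z]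
          (fun _ => (-1 : ℂ)) := by
        filter_upwards [hΩ.mem_nhds hz] with w hw
        exact hhyp w hw
      rw [wz_congr heq, wz_const]
    have hexp : wz (fun w => lor3c (fun i => Gc i w) (fun i => Gc i w)) z
        = -(wz (Gc 0) z * Gc 0 z + Gc 0 z * wz (Gc 0) z)
          + (wz (Gc 1) z * Gc 1 z + Gc 1 z * wz (Gc 1) z)
          + (wz (Gc 2) z * Gc 2 z + Gc 2 z * wz (Gc 2) z) := by
      show wz (fun w => -(Gc 0 w * Gc 0 w) + Gc 1 w * Gc 1 w + Gc 2 w * Gc 2 w) z = _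
      rw [wz_add (((((hGdiff 0).fun_mul (hGdiff 0)).fun_neg).fun_add ((hGdiff 1).fun_mul (hGdiff 1))))
            ((hGdiff 2).fun_mul (hGdiff 2)),
          wz_add (((hGdiff 0).fun_mul (hGdiff 0)).fun_neg) ((hGdiff 1).fun_mul (hGdiff 1)),
          wz_neg, wz_mul (hGdiff 0) (hGdiff 0), wz_mul (hGdiff 1) (hGdiff 1),
          wz_mul (hGdiff 2) (hGdiff 2)]
    rw [hexp] at hP
    linear_combination hP / 2
  -- main computation
  have hmain : wzb (fun w => -(h 0 w * h 0 w) + h 1 w * h 1 w + h 2 w * h 2 w) z = 0 := by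
    rw [wzb_add (((((hdiff 0).fun_mul (hdiff 0)).fun_neg).fun_add ((hdiff 1).fun_mul (hdiff 1))))
          ((hdiff 2).fun_mul (hdiff 2)),
        wzb_add (((hdiff 0).fun_mul (hdiff 0)).fun_neg) ((hdiff 1).fun_mul (hdiff 1)),
        wzb_neg, wzb_mul (hdiff 0) (hdiff 0), wzb_mul (hdiff 1) (hdiff 1),
        wzb_mul (hdiff 2) (hdiff 2), hfi 0, hfi 1, hfi 2]
    linear_combination 2 * f * horth
  exact hmain
end

section
/- Equip ℝ⁴ with the Lorentzian form ⟨x,y⟩ = −x₀y₀ + x₁y₁ + x₂y₂ + x₃y₃. Suppose ψ_z, ψ_{z̄} = conj(ψ_z) ∈ ℂ⁴, η, N ∈ ℝ⁴ and scalars λ > 0, u, h_z ∈ ℂ, p ∈ ℂ satisfy the metric relations ⟨ψ_z,ψ_z⟩ = 0, ⟨ψ_z,ψ_{z̄}⟩ = λ/2, ⟨η,η⟩ = 1, ⟨N,N⟩ = −1, ⟨η,N⟩ = ⟨ψ_z,η⟩ = ⟨ψ_z,N⟩ = 0 (with ⟨·,·⟩ extended ℂ-bilinearly). Define the formal derivatives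 η_z := −H ψ_z − (2p/λ) ψ_{z̄} + A N and N_z := (1 − 2|h_z|²/λ) ψ_z − (2h_z²/λ) ψ_{z̄} + A η, where A = −u h_z and H ∈ ℝ. Then ⟨η_z + N_z, η_z + N_z⟩ = (p + h_z²)·(2H − 1 − u²), provided the relation 4|h_z|²/λ = 1 − u² holds. -/
open Complex

/-- ℂ-bilinear extension of the Lorentzian form `−x₀y₀ + x₁y₁ + x₂y₂ + x₃y₃` on ℂ⁴. -/
def lor4c (x y : Fin 4 → ℂ) : ℂ := -(x 0 * y 0) + x 1 * y 1 + x 2 * y 2 + x 3 * y 3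

open ComplexConjugate

/-!
Write `ψ_z̄ = conj ψ_z`. Then `η_z + N_z = α ψ_z + β ψ_z̄ + A (η + N)` with
`α = 1 - H - 2|h_z|²/λ` and `β = -2(p + h_z²)/λ`. The vector `η + N` is null and orthogonal to
both `ψ_z` and `ψ_z̄`, and `ψ_z`, `ψ_z̄` are null, so only the cross term survives:
`⟨η_z + N_z, η_z + N_z⟩ = 2αβ⟨ψ_z, ψ_z̄⟩ = αβλ = -2α(p + h_z²)`,
and `-2α = 2H - 1 - u²` by the relation `4|h_z|²/λ = 1 - u²`.
-/

theorem lor4c_conj (x y : Fin 4 → ℂ) :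
    lor4c (fun i => conj (x i)) (fun i => conj (y i)) = conj (lor4c x y) := by
  simp [lor4c]

theorem lor4c_conj_ofReal (x : Fin 4 → ℂ) (y : Fin 4 → ℝ) :
    lor4c (fun i => conj (x i)) (fun i => (y i : ℂ)) = conj (lor4c x fun i => (y i : ℂ)) := by
  simp [lor4c]

theorem lor4c_add_right (x y z : Fin 4 → ℂ) :
    lor4c x (fun i => y i + z i) = lor4c x y + lor4c x z := by
  unfold lor4c; ring

theorem lor4c_add_self (x y : Fin 4 → ℂ) :
    lor4c (fun i => x i + y i) (fun i => x i + y i) = lor4c x x + 2 * lor4c x y + lor4c y y := by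
  unfold lor4c; ring

theorem lor4c_combination_self (a b c : Fin 4 → ℂ) (α β γ : ℂ) :
    lor4c (fun i => α * a i + β * b i + γ * c i) (fun i => α * a i + β * b i + γ * c i)
      = α ^ 2 * lor4c a a + β ^ 2 * lor4c b b + γ ^ 2 * lor4c c c
        + 2 * α * β * lor4c a b + 2 * α * γ * lor4c a c + 2 * β * γ * lor4c b c := by
  unfold lor4c; ring

theorem lor4c_combination_self_of_null {a b c : Fin 4 → ℂ} (α β γ : ℂ)
    (ha : lor4c a a = 0) (hb : lor4c b b = 0) (hc : lor4c c c = 0)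
    (hac : lor4c a c = 0) (hbc : lor4c b c = 0) :
    lor4c (fun i => α * a i + β * b i + γ * c i) (fun i => α * a i + β * b i + γ * c i)
      = 2 * α * β * lor4c a b := by
  rw [lor4c_combination_self, ha, hb, hc, hac, hbc]; ring

/-- Key computation for harmonicity of the hyperbolic Gauss map: with the structure
equations and metric relations of a conformal surface in `ℍ² × ℝ ⊂ 𝕃⁴`,
`⟨η_z + N_z, η_z + N_z⟩ = (p + h_z²)(2H − 1 − u²)`. -/
theorem stmt12 (ψz : Fin 4 → ℂ) (η N : Fin 4 → ℝ) (lam H : ℝ) (u hz p : ℂ)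
    (hlam : 0 < lam)
    (h1 : lor4c ψz ψz = 0)
    (h2 : lor4c ψz (fun i => starRingEnd ℂ (ψz i)) = lam / 2)
    (h3 : lor4c (fun i => ((η i : ℝ) : ℂ)) (fun i => ((η i : ℝ) : ℂ)) = 1)
    (h4 : lor4c (fun i => ((N i : ℝ) : ℂ)) (fun i => ((N i : ℝ) : ℂ)) = -1)
    (h5 : lor4c (fun i => ((η i : ℝ) : ℂ)) (fun i => ((N i : ℝ) : ℂ)) = 0)
    (h6 : lor4c ψz (fun i => ((η i : ℝ) : ℂ)) = 0)
    (h7 : lor4c ψz (fun i => ((N i : ℝ) : ℂ)) = 0)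
    (hC4 : (4 * ‖hz‖^2 / lam : ℂ) = 1 - u^2) :
    let A : ℂ := -u * hz
    let ηz : Fin 4 → ℂ := fun i =>
      -(H : ℂ) * ψz i - (2 * p / lam) * starRingEnd ℂ (ψz i) + A * ((N i : ℝ) : ℂ)
    let Nz : Fin 4 → ℂ := fun i =>
      (1 - 2 * ‖hz‖^2 / lam) * ψz i - (2 * hz^2 / lam) * starRingEnd ℂ (ψz i)
        + A * ((η i : ℝ) : ℂ)
    lor4c (fun i => ηz i + Nz i) (fun i => ηz i + Nz i)
      = (p + hz^2) * (2 * H - 1 - u^2) := by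
  intro A ηz Nz
  have hν : lor4c (fun i => ((η i + N i : ℝ) : ℂ)) (fun i => ((η i + N i : ℝ) : ℂ)) = 0 := by
    simp only [ofReal_add]
    rw [lor4c_add_self, h3, h4, h5]; ring
  have hψν : lor4c ψz (fun i => ((η i + N i : ℝ) : ℂ)) = 0 := by
    simp only [ofReal_add]
    rw [lor4c_add_right, h6, h7]; ring
  have hψbar : lor4c (fun i => conj (ψz i)) (fun i => conj (ψz i)) = 0 := by
    rw [lor4c_conj, h1, map_zero]
  have hψbarν : lor4c (fun i => conj (ψz i)) (fun i => ((η i + N i : ℝ) : ℂ)) = 0 := by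
    rw [lor4c_conj_ofReal, hψν, map_zero]
  have hsplit : (fun i => ηz i + Nz i) = fun i =>
      (1 - H - 2 * ‖hz‖ ^ 2 / lam) * ψz i + (-2 * (p + hz ^ 2) / lam) * conj (ψz i)
        + A * ((η i + N i : ℝ) : ℂ) := by
    funext i; simp only [ηz, Nz, ofReal_add]; ring
  have hlam' : (lam : ℂ) ≠ 0 := ofReal_ne_zero.mpr hlam.ne'
  rw [hsplit, lor4c_combination_self_of_null _ _ _ h1 hψbar hν hψν hψbarν, h2]
  rw [div_eq_iff hlam'] at hC4
  field_simp
  linear_combination (p + hz ^ 2) * hC4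
end

section
/- Equip ℝ³ with the Lorentzian form of signature (−,+,+). Let Ω ⊆ ℂ be open and connected, and let G, G̃ : Ω → ℍ² ⊂ ℝ³ be real-analytic harmonic maps (G_{z z̄} ∝ G and likewise for G̃) such that ⟨G_z,G_z⟩ = ⟨G̃_z,G̃_z⟩ and ⟨G_z,G_{z̄}⟩ = ⟨G̃_z,G̃_{z̄}⟩ hold on Ω. Suppose z₀ ∈ Ω is a point where G is an immersion (dG(z₀) has rank 2), and G(z₀) = G̃(z₀), G_z(z₀) = G̃_z(z₀). Then G = G̃ on Ω. -/
/-- Complexification of a real map. -/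
def cx (G : ℂ → (Fin 3 → ℝ)) : ℂ → Fin 3 → ℂ := fun w i => ((G w i : ℝ) : ℂ)

/-!
A map `G` into `ℍ² = {⟨x, x⟩ = -1}` is its own unit normal, so `⟨∂ᵤ∂ᵥG, G⟩ = -g(u, v)`, where
`g` is the first fundamental form, while Koszul's formula expresses `⟨∂ᵤ∂ᵥG, ∂_w G⟩` through
the derivatives of `g`. Where `det g ≠ 0` the frame `(G, ∂ₓG, ∂ᵧG)` is a basis of `ℝ³`, so it
solves a linear system `∂ᵤ frame = Γ(u) · frame` whose coefficients depend on `g` alone. The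
Wirtinger hypotheses say that `G` and `G̃` have the same `g`, since
`⟨G_z, G_z⟩ = (g₁₁ - g₂₂)/4 - i g₁₂/2` and `⟨G_z, G_z̄⟩ = (g₁₁ + g₂₂)/4`, and the same frame at
`z₀`, where the immersion condition gives `det g > 0`. Uniqueness for linear ODEs along the
segments issuing from `z₀` gives `G = G̃` near `z₀`, and the identity theorem for real-analytic
maps on the connected `Ω` concludes.
-/

open Complex Set Metric Filter Topology ContinuousLinearMap

noncomputable section

lemma ContinuousLinearMap.apply_eq_re_smul_add_im_smul {E : Type*} [AddCommGroup E] [Module ℝ E]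
    [TopologicalSpace E] (φ : ℂ →L[ℝ] E) (u : ℂ) : φ u = u.re • φ 1 + u.im • φ I := by
  conv_lhs => rw [show u = u.re • (1 : ℂ) + u.im • I by apply Complex.ext <;> simp]
  rw [map_add, map_smul, map_smul]

lemma ContinuousLinearMap.linearIndependent_apply_one_I {E : Type*} [AddCommGroup E]
    [Module ℝ E] [TopologicalSpace E] {φ : ℂ →L[ℝ] E} (hφ : Function.Injective φ) :
    LinearIndependent ℝ ![φ 1, φ I] := by
  refine LinearIndependent.pair_iff.2 fun s t hst => ?_
  have h : s • (1 : ℂ) + t • I = 0 := hφ (by rw [map_add, map_smul, map_smul, hst, map_zero])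
  simpa [Complex.ext_iff] using h

section Calculus

variable {E F : Type*} [NormedAddCommGroup E] [NormedSpace ℝ E] [NormedAddCommGroup F]
  [NormedSpace ℝ F]

lemma ContDiffAt.differentiableAt_fderiv {f : F → E} {x : F} (hf : ContDiffAt ℝ 2 f x) :
    DifferentiableAt ℝ (fderiv ℝ f) x :=
  (hf.fderiv_right (m := 1) (by norm_num)).differentiableAt (by norm_num)

lemma fderiv_fderiv_apply {f : F → E} {x : F} (hf : DifferentiableAt ℝ (fderiv ℝ f) x) (u v : F) :
    fderiv ℝ (fun y => fderiv ℝ f y v) x u = fderiv ℝ (fderiv ℝ f) x u v := by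
  rw [fderiv_clm_apply hf (differentiableAt_const v)]
  simp

theorem Convex.eqOn_of_fderiv_eq_apply {s : Set F} (hs : Convex ℝ s)
    {A : F → F → E →L[ℝ] E} (hA : ∀ v, ContinuousOn (fun x => A x v) s) {f g : F → E}
    (hf : ∀ x ∈ s, DifferentiableAt ℝ f x) (hf' : ∀ x ∈ s, ∀ v, fderiv ℝ f x v = A x v (f x))
    (hg : ∀ x ∈ s, DifferentiableAt ℝ g x) (hg' : ∀ x ∈ s, ∀ v, fderiv ℝ g x v = A x v (g x))
    {x₀ : F} (hx₀ : x₀ ∈ s) (h : f x₀ = g x₀) : EqOn f g s := by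
  intro y hy
  let γ : ℝ → F := fun t => x₀ + t • (y - x₀)
  have hγs : MapsTo γ (Icc 0 1) s := fun t ht => hs.add_smul_sub_mem hx₀ hy ht
  have hγ : ∀ t, HasDerivAt γ (y - x₀) t := fun t => by
    simpa only [id, one_smul] using ((hasDerivAt_id t).smul_const (y - x₀)).const_add x₀
  obtain ⟨C, hC⟩ := isCompact_Icc.exists_bound_of_continuousOn
    ((hA (y - x₀)).comp (continuous_const.add (continuous_id.smul continuous_const)).continuousOn
      hγs)
  have hlip : ∀ t ∈ Ico (0 : ℝ) 1,
      LipschitzOnWith C.toNNReal (fun e => A (γ t) (y - x₀) e) univ := fun t ht =>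
    ((A (γ t) (y - x₀)).lipschitz.weaken (by
      rw [← NNReal.coe_le_coe, coe_nnnorm, Real.coe_toNNReal']
      exact (hC t (Ico_subset_Icc_self ht)).trans (le_max_left _ _))).lipschitzOnWith
  have hsol : ∀ φ : F → E, (∀ x ∈ s, DifferentiableAt ℝ φ x) →
      (∀ x ∈ s, ∀ v, fderiv ℝ φ x v = A x v (φ x)) →
      ContinuousOn (φ ∘ γ) (Icc 0 1) ∧
        ∀ t ∈ Ico (0 : ℝ) 1, HasDerivWithinAt (φ ∘ γ) (A (γ t) (y - x₀) (φ (γ t))) (Ici t) t := by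
    intro φ hφ hφ'
    refine ⟨fun t ht => ((hφ _ (hγs ht)).continuousAt.comp (hγ t).continuousAt).continuousWithinAt,
      fun t ht => ?_⟩
    have hγt := hγs (Ico_subset_Icc_self ht)
    rw [← hφ' _ hγt]
    exact ((hφ _ hγt).hasFDerivAt.comp_hasDerivAt t (hγ t)).hasDerivWithinAt
  obtain ⟨hfc, hfd⟩ := hsol f hf hf'
  obtain ⟨hgc, hgd⟩ := hsol g hg hg'
  have := ODE_solution_unique_of_mem_Icc_right hlip hfc hfd (fun _ _ => mem_univ _) hgc hgd
    (fun _ _ => mem_univ _) (by simpa [γ] using h) (right_mem_Icc.mpr zero_le_one)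
  simpa [γ] using this

end Calculus

def Matrix.mulVecCLM {ι V : Type*} [Fintype ι] [DecidableEq ι] [NormedAddCommGroup V]
    [NormedSpace ℝ V] (m : Matrix ι ι ℝ) : (ι → V) →L[ℝ] (ι → V) :=
  ∑ i, ∑ j, m i j • (ContinuousLinearMap.single ℝ (fun _ => V) i).comp (ContinuousLinearMap.proj j)

lemma Matrix.mulVecCLM_apply {ι V : Type*} [Fintype ι] [DecidableEq ι] [NormedAddCommGroup V]
    [NormedSpace ℝ V] (m : Matrix ι ι ℝ) (p : ι → V) (i : ι) :
    m.mulVecCLM p i = ∑ j, m i j • p j := by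
  simp [Matrix.mulVecCLM, Finset.sum_apply, Pi.single_apply]

namespace Minkowski

def lorentz : (Fin 3 → ℝ) →L[ℝ] (Fin 3 → ℝ) →L[ℝ] ℝ :=
  -(mul ℝ ℝ).bilinearComp (proj 0) (proj 0) + (mul ℝ ℝ).bilinearComp (proj 1) (proj 1)
    + (mul ℝ ℝ).bilinearComp (proj 2) (proj 2)

@[simp]
lemma lorentz_apply (x y : Fin 3 → ℝ) :
    lorentz x y = -(x 0 * y 0) + x 1 * y 1 + x 2 * y 2 := by
  simp [lorentz]

lemma lorentz_comm (x y : Fin 3 → ℝ) : lorentz x y = lorentz y x := by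
  simp only [lorentz_apply]; ring

lemma lorentz_self_pos_of_orthogonal {H v : Fin 3 → ℝ} (hH : lorentz H H = -1)
    (hv : lorentz v H = 0) (hne : v ≠ 0) : 0 < lorentz v v := by
  simp only [lorentz_apply] at hH hv ⊢
  have hH0 : H 0 ≠ 0 := by
    intro h; rw [h] at hH; nlinarith [sq_nonneg (H 1), sq_nonneg (H 2)]
  -- Lagrange's identity for the spatial part
  have key : (-(v 0 * v 0) + v 1 * v 1 + v 2 * v 2) * H 0 ^ 2
      = v 1 ^ 2 + v 2 ^ 2 + (v 1 * H 2 - v 2 * H 1) ^ 2 := by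
    have hs : v 0 * H 0 = v 1 * H 1 + v 2 * H 2 := by linarith
    linear_combination (-(v 1 * H 1 + v 2 * H 2) - v 0 * H 0) * hs - (v 1 ^ 2 + v 2 ^ 2) * hH
  by_contra hle
  have hH0sq : 0 < H 0 ^ 2 := by positivity
  have h1 : v 1 = 0 := by nlinarith [sq_nonneg (v 1 * H 2 - v 2 * H 1), sq_nonneg (v 2)]
  have h2 : v 2 = 0 := by nlinarith [sq_nonneg (v 1 * H 2 - v 2 * H 1), sq_nonneg (v 1)]
  have h0 : v 0 = 0 := by
    rw [h1, h2] at hv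
    exact (mul_eq_zero.mp (by linarith : v 0 * H 0 = 0)).resolve_right hH0
  exact hne (funext fun i => by fin_cases i <;> assumption)

lemma eq_zero_of_lorentz_orthogonal {H X Y x : Fin 3 → ℝ} (hH : lorentz H H = -1)
    (hX : lorentz X H = 0) (hY : lorentz Y H = 0)
    (hd : lorentz X X * lorentz Y Y - lorentz X Y ^ 2 ≠ 0)
    (h₀ : lorentz x H = 0) (h₁ : lorentz x X = 0) (h₂ : lorentz x Y = 0) : x = 0 := by
  let N : Matrix (Fin 3) (Fin 3) ℝ := !![-H 0, H 1, H 2; -X 0, X 1, X 2; -Y 0, Y 1, Y 2]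
  let B : Matrix (Fin 3) (Fin 3) ℝ := !![H 0, H 1, H 2; X 0, X 1, X 2; Y 0, Y 1, Y 2]
  have hgram : N * B.transpose = Matrix.of fun i j => lorentz (![H, X, Y] i) (![H, X, Y] j) := by
    ext i j
    fin_cases i <;> fin_cases j <;> simp [N, B, Matrix.mul_apply, Fin.sum_univ_three]
  have hN : N.det ≠ 0 := by
    intro h
    have := congrArg Matrix.det hgram
    rw [Matrix.det_mul, h, zero_mul, Matrix.det_fin_three] at this
    simp only [Matrix.of_apply, Matrix.cons_val, hH, hX, hY, lorentz_comm H, lorentz_comm Y X]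
      at this
    exact hd (by linear_combination this)
  refine Matrix.eq_zero_of_mulVec_eq_zero hN (funext fun i => ?_)
  simp only [lorentz_apply] at h₀ h₁ h₂
  fin_cases i <;> simp [N, Matrix.mulVec, dotProduct, Fin.sum_univ_three] <;> linarith

/-- Cramer's rule: the coordinates in a frame `(H, X, Y)` with Gram matrix
`diag(-1, [[E, F], [F, G]])` of the vector whose products with `H, X, Y` are `-a, p, q`. -/
def frameCoords (E F G a p q : ℝ) : Fin 3 → ℝ :=
  ![a, (G * p - F * q) / (E * G - F ^ 2), (E * q - F * p) / (E * G - F ^ 2)]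

lemma eq_sum_frameCoords_smul {H X Y : Fin 3 → ℝ} (hH : lorentz H H = -1)
    (hX : lorentz X H = 0) (hY : lorentz Y H = 0)
    (hd : lorentz X X * lorentz Y Y - lorentz X Y ^ 2 ≠ 0) (V : Fin 3 → ℝ) :
    V = ∑ j, frameCoords (lorentz X X) (lorentz X Y) (lorentz Y Y)
      (-lorentz V H) (lorentz V X) (lorentz V Y) j • ![H, X, Y] j := by
  rw [← sub_eq_zero]
  refine eq_zero_of_lorentz_orthogonal hH hX hY hd ?_ ?_ ?_ <;>
  · simp only [Fin.sum_univ_three, frameCoords, map_sub, map_add, map_smul, sub_apply, add_apply,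
      smul_apply, Matrix.cons_val, hH, hX, hY, lorentz_comm H, lorentz_comm Y X, smul_eq_mul]
    grind

lemma lorentz_gram_det_pos {H X Y : Fin 3 → ℝ} (hH : lorentz H H = -1)
    (hX : lorentz X H = 0) (hY : lorentz Y H = 0) (hXY : LinearIndependent ℝ ![X, Y]) :
    0 < lorentz X X * lorentz Y Y - lorentz X Y ^ 2 := by
  rw [LinearIndependent.pair_iff] at hXY
  have hX0 : X ≠ 0 := fun h => one_ne_zero (hXY 1 0 (by simp [h])).1
  have hE : 0 < lorentz X X := lorentz_self_pos_of_orthogonal hH hX hX0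
  -- the component of `Y` orthogonal to `X`, scaled by `lorentz X X`
  set W := lorentz X X • Y - lorentz X Y • X with hW
  have hW0 : W ≠ 0 := fun h => hE.ne' (hXY (-lorentz X Y) (lorentz X X) (by
    rw [← h, hW]; module)).2
  have hWH : lorentz W H = 0 := by simp [hW, hX, hY]
  have hWW : lorentz W W = lorentz X X * (lorentz X X * lorentz Y Y - lorentz X Y ^ 2) := by
    simp only [hW, map_sub, map_smul, sub_apply, smul_apply, smul_eq_mul, lorentz_comm Y X]
    ring
  have := lorentz_self_pos_of_orthogonal hH hWH hW0
  rw [hWW] at this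
  exact pos_of_mul_pos_right this hE.le

section FirstForm

variable {F : Type*} [NormedAddCommGroup F] [NormedSpace ℝ F]

def firstForm (H : F → Fin 3 → ℝ) (z v w : F) : ℝ :=
  lorentz (fderiv ℝ H z v) (fderiv ℝ H z w)

def christoffel (g : F → F → F → ℝ) (z u v w : F) : ℝ :=
  (fderiv ℝ (fun z => g z v w) z u + fderiv ℝ (fun z => g z u w) z v
    - fderiv ℝ (fun z => g z u v) z w) / 2

lemma fderiv_lorentz_apply {f g : F → Fin 3 → ℝ} {z : F} (hf : DifferentiableAt ℝ f z)
    (hg : DifferentiableAt ℝ g z) (v : F) :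
    fderiv ℝ (fun z => lorentz (f z) (g z)) z v
      = lorentz (fderiv ℝ f z v) (g z) + lorentz (f z) (fderiv ℝ g z v) := by
  rw [lorentz.fderiv_of_bilinear hf hg]
  simp [add_comm]

variable {Ω : Set F} {H : F → Fin 3 → ℝ} {z : F}

lemma lorentz_fderiv_apply_self (hΩ : IsOpen Ω) (hH : ∀ z ∈ Ω, DifferentiableAt ℝ H z)
    (hH1 : ∀ z ∈ Ω, lorentz (H z) (H z) = -1) (hz : z ∈ Ω) (v : F) :
    lorentz (fderiv ℝ H z v) (H z) = 0 := by
  have hconst : (fun z => lorentz (H z) (H z)) =ᶠ[𝓝 z] fun _ => -1 :=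
    eventually_of_mem (hΩ.mem_nhds hz) hH1
  have := fderiv_lorentz_apply (hH z hz) (hH z hz) v
  rw [hconst.fderiv_eq, fderiv_const_apply, lorentz_comm (H z)] at this
  simpa using this.symm

lemma lorentz_snd_fderiv_apply_self (hΩ : IsOpen Ω) (hH : ContDiffOn ℝ 2 H Ω)
    (hH1 : ∀ z ∈ Ω, lorentz (H z) (H z) = -1) (hz : z ∈ Ω) (u v : F) :
    lorentz (fderiv ℝ (fderiv ℝ H) z u v) (H z) = -firstForm H z u v := by
  have hH' : ContDiffAt ℝ 2 H z := hH.contDiffAt (hΩ.mem_nhds hz)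
  have hdiff : ∀ z ∈ Ω, DifferentiableAt ℝ H z := fun z hz =>
    (hH.contDiffAt (hΩ.mem_nhds hz)).differentiableAt (by norm_num)
  have hzero : (fun z => lorentz (fderiv ℝ H z v) (H z)) =ᶠ[𝓝 z] fun _ => 0 :=
    eventually_of_mem (hΩ.mem_nhds hz) fun z hz => lorentz_fderiv_apply_self hΩ hdiff hH1 hz v
  have := fderiv_lorentz_apply ((hH'.differentiableAt_fderiv.clm_apply
    (differentiableAt_const v))) (hdiff z hz) u
  rw [hzero.fderiv_eq, fderiv_const_apply, fderiv_fderiv_apply hH'.differentiableAt_fderiv,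
    lorentz_comm (fderiv ℝ H z v), zero_apply] at this
  rw [firstForm]
  linarith

lemma fderiv_firstForm (hH : ContDiffAt ℝ 2 H z) (u v w : F) :
    fderiv ℝ (fun z => firstForm H z v w) z u
      = lorentz (fderiv ℝ (fderiv ℝ H) z u v) (fderiv ℝ H z w)
        + lorentz (fderiv ℝ H z v) (fderiv ℝ (fderiv ℝ H) z u w) := by
  have hd := hH.differentiableAt_fderiv
  simp only [firstForm]
  rw [fderiv_lorentz_apply (hd.clm_apply (differentiableAt_const v))
      (hd.clm_apply (differentiableAt_const w)),
    fderiv_fderiv_apply hd, fderiv_fderiv_apply hd]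

/-- Koszul's formula. -/
lemma lorentz_snd_fderiv_apply_fderiv_eq_christoffel (hH : ContDiffAt ℝ 2 H z) (u v w : F) :
    lorentz (fderiv ℝ (fderiv ℝ H) z u v) (fderiv ℝ H z w) = christoffel (firstForm H) z u v w := by
  have hsymm := hH.isSymmSndFDerivAt (by simp)
  simp only [christoffel, fderiv_firstForm hH, hsymm v u, hsymm w u, hsymm w v,
    lorentz_comm (fderiv ℝ H z u), lorentz_comm (fderiv ℝ H z v)]
  ring

lemma christoffel_congr {g g' : F → F → F → ℝ} (h : g =ᶠ[𝓝 z] g') :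
    christoffel g z = christoffel g' z := by
  have hd : ∀ v w, fderiv ℝ (fun x => g x v w) z = fderiv ℝ (fun x => g' x v w) z :=
    fun v w => EventuallyEq.fderiv_eq (h.mono fun x hx => congrFun (congrFun hx v) w)
  ext u v w
  simp only [christoffel, hd]

end FirstForm

def frame (H : ℂ → Fin 3 → ℝ) (z : ℂ) : Fin 3 → Fin 3 → ℝ :=
  ![H z, fderiv ℝ H z 1, fderiv ℝ H z I]

def gramDet (g : ℂ → ℂ → ℂ → ℝ) (z : ℂ) : ℝ := g z 1 1 * g z I I - g z 1 I ^ 2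

def gaussCoeffs (g : ℂ → ℂ → ℂ → ℝ) (z u v : ℂ) : Fin 3 → ℝ :=
  frameCoords (g z 1 1) (g z 1 I) (g z I I) (g z u v) (christoffel g z u v 1)
    (christoffel g z u v I)

/-- Row `i` holds the coordinates, in `frame H z`, of the derivative of the `i`-th frame vector
in the direction `u`. -/
def connection (g : ℂ → ℂ → ℂ → ℝ) (z u : ℂ) : Matrix (Fin 3) (Fin 3) ℝ :=
  Matrix.of ![![0, u.re, u.im], gaussCoeffs g z u 1, gaussCoeffs g z u I]

section Surface

variable {Ω : Set ℂ} {H : ℂ → Fin 3 → ℝ} {z : ℂ}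

lemma hasFDerivAt_frame (hH : ContDiffAt ℝ 2 H z) :
    HasFDerivAt (frame H) (pi ![fderiv ℝ H z, (fderiv ℝ (fderiv ℝ H) z).flip 1,
      (fderiv ℝ (fderiv ℝ H) z).flip I]) z := by
  have hd := hH.differentiableAt_fderiv
  refine hasFDerivAt_pi'.2 fun i => ?_
  fin_cases i
  · exact (hH.differentiableAt (by norm_num)).hasFDerivAt
  · exact (hd.hasFDerivAt.clm_apply (hasFDerivAt_const 1 z)).congr_fderiv (by ext; simp)
  · exact (hd.hasFDerivAt.clm_apply (hasFDerivAt_const I z)).congr_fderiv (by ext; simp)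

lemma snd_fderiv_eq_sum_gaussCoeffs_smul (hΩ : IsOpen Ω) (hH : ContDiffOn ℝ 2 H Ω)
    (hH1 : ∀ z ∈ Ω, lorentz (H z) (H z) = -1) (hz : z ∈ Ω) (hdet : gramDet (firstForm H) z ≠ 0)
    (u v : ℂ) :
    fderiv ℝ (fderiv ℝ H) z u v = ∑ j, gaussCoeffs (firstForm H) z u v j • frame H z j := by
  have hdiff : ∀ z ∈ Ω, DifferentiableAt ℝ H z := fun z hz =>
    (hH.contDiffAt (hΩ.mem_nhds hz)).differentiableAt (by norm_num)
  have hH' : ContDiffAt ℝ 2 H z := hH.contDiffAt (hΩ.mem_nhds hz)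
  conv_lhs => rw [eq_sum_frameCoords_smul (hH1 z hz) (lorentz_fderiv_apply_self hΩ hdiff hH1 hz 1)
    (lorentz_fderiv_apply_self hΩ hdiff hH1 hz I) hdet (fderiv ℝ (fderiv ℝ H) z u v)]
  rw [lorentz_snd_fderiv_apply_self hΩ hH hH1 hz, neg_neg,
    lorentz_snd_fderiv_apply_fderiv_eq_christoffel hH',
    lorentz_snd_fderiv_apply_fderiv_eq_christoffel hH']
  rfl

lemma fderiv_frame (hΩ : IsOpen Ω) (hH : ContDiffOn ℝ 2 H Ω)
    (hH1 : ∀ z ∈ Ω, lorentz (H z) (H z) = -1) (hz : z ∈ Ω) (hdet : gramDet (firstForm H) z ≠ 0)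
    (u : ℂ) :
    fderiv ℝ (frame H) z u = Matrix.mulVecCLM (connection (firstForm H) z u) (frame H z) := by
  rw [(hasFDerivAt_frame (hH.contDiffAt (hΩ.mem_nhds hz))).fderiv]
  ext1 i
  rw [Matrix.mulVecCLM_apply]
  fin_cases i
  · simpa [connection, frame, Fin.sum_univ_three] using apply_eq_re_smul_add_im_smul _ u
  all_goals
    simp only [Fin.reduceFinMk, Fin.isValue, pi_apply, Matrix.cons_val, flip_apply]
    rw [snd_fderiv_eq_sum_gaussCoeffs_smul hΩ hH hH1 hz hdet]
    rfl

lemma connection_congr {g g' : ℂ → ℂ → ℂ → ℝ} (h : g =ᶠ[𝓝 z] g') :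
    connection g z = connection g' z := by
  funext u
  simp only [connection, gaussCoeffs, christoffel_congr h, h.eq_of_nhds]

lemma contDiffOn_firstForm (hΩ : IsOpen Ω) (hH : ContDiffOn ℝ 2 H Ω) (v w : ℂ) :
    ContDiffOn ℝ 1 (fun z => firstForm H z v w) Ω := by
  have hd := hH.fderiv_of_isOpen hΩ (m := 1) (by norm_num)
  exact (lorentz.contDiff.comp_contDiffOn (hd.clm_apply contDiffOn_const)).clm_apply
    (hd.clm_apply contDiffOn_const)

lemma continuousOn_christoffel (hΩ : IsOpen Ω) (hH : ContDiffOn ℝ 2 H Ω) (u v w : ℂ) :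
    ContinuousOn (fun z => christoffel (firstForm H) z u v w) Ω := by
  have hd : ∀ a b c : ℂ, ContinuousOn (fun z => fderiv ℝ (fun z => firstForm H z b c) z a) Ω :=
    fun a b c => ((contDiffOn_firstForm hΩ hH b c).continuousOn_fderiv_of_isOpen hΩ
      le_rfl).clm_apply continuousOn_const
  exact (((hd u v w).add (hd v u w)).sub (hd w u v)).div_const 2

lemma continuousOn_mulVecCLM_connection {s : Set ℂ} (hΩ : IsOpen Ω) (hH : ContDiffOn ℝ 2 H Ω)
    (hs : s ⊆ Ω) (hdet : ∀ z ∈ s, gramDet (firstForm H) z ≠ 0) (u : ℂ) :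
    ContinuousOn (fun z => Matrix.mulVecCLM (V := Fin 3 → ℝ) (connection (firstForm H) z u)) s := by
  have hg : ∀ v w, ContinuousOn (fun z => firstForm H z v w) s := fun v w =>
    (contDiffOn_firstForm hΩ hH v w).continuousOn.mono hs
  have hΓ : ∀ v w, ContinuousOn (fun z => christoffel (firstForm H) z u v w) s := fun v w =>
    (continuousOn_christoffel hΩ hH u v w).mono hs
  have hcoeff : ∀ v j, ContinuousOn (fun z => gaussCoeffs (firstForm H) z u v j) s := by
    intro v j
    fin_cases j
    · exact hg u v
    · exact (((hg I I).mul (hΓ v 1)).sub ((hg 1 I).mul (hΓ v I))).div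
        (((hg 1 1).mul (hg I I)).sub ((hg 1 I).pow 2)) hdet
    · exact (((hg 1 1).mul (hΓ v I)).sub ((hg 1 I).mul (hΓ v 1))).div
        (((hg 1 1).mul (hg I I)).sub ((hg 1 I).pow 2)) hdet
  have hentry : ∀ i j, ContinuousOn (fun z => connection (firstForm H) z u i j) s := by
    intro i j
    fin_cases i
    · fin_cases j <;> exact continuousOn_const
    · exact hcoeff 1 j
    · exact hcoeff I j
  exact continuousOn_finsetSum _ fun i _ => continuousOn_finsetSum _ fun j _ =>
    (hentry i j).smul continuousOn_const

theorem eventuallyEq_of_firstForm_eq {G Gt : ℂ → Fin 3 → ℝ} (hΩ : IsOpen Ω)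
    (hG : ContDiffOn ℝ 2 G Ω) (hGt : ContDiffOn ℝ 2 Gt Ω)
    (hG1 : ∀ z ∈ Ω, lorentz (G z) (G z) = -1) (hGt1 : ∀ z ∈ Ω, lorentz (Gt z) (Gt z) = -1)
    (hform : EqOn (firstForm G) (firstForm Gt) Ω) (hz : z ∈ Ω)
    (hdet : gramDet (firstForm G) z ≠ 0) (hframe : frame G z = frame Gt z) : G =ᶠ[𝓝 z] Gt := by
  have hform' : ∀ w ∈ Ω, firstForm Gt =ᶠ[𝓝 w] firstForm G := fun w hw =>
    eventually_of_mem (hΩ.mem_nhds hw) fun x hx => (hform hx).symm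
  have hdetc : ContinuousAt (gramDet (firstForm G)) z := by
    have hc : ∀ v w, ContinuousAt (fun z => firstForm G z v w) z := fun v w =>
      (contDiffOn_firstForm hΩ hG v w).continuousOn.continuousAt (hΩ.mem_nhds hz)
    exact ((hc 1 1).mul (hc I I)).sub ((hc 1 I).pow 2)
  obtain ⟨r, hr, hball⟩ := Metric.mem_nhds_iff.1
    (inter_mem (hΩ.mem_nhds hz) (hdetc.eventually_ne hdet))
  have hΩr : ball z r ⊆ Ω := fun w hw => (hball hw).1
  have hdetr : ∀ w ∈ ball z r, gramDet (firstForm G) w ≠ 0 := fun w hw => (hball hw).2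
  have hdetr' : ∀ w ∈ ball z r, gramDet (firstForm Gt) w ≠ 0 := fun w hw => by
    rw [gramDet, ← hform (hΩr hw)]; exact hdetr w hw
  have hsame := (convex_ball z r).eqOn_of_fderiv_eq_apply
    (continuousOn_mulVecCLM_connection hΩ hG hΩr hdetr)
    (fun w hw => (hasFDerivAt_frame (hG.contDiffAt (hΩ.mem_nhds (hΩr hw)))).differentiableAt)
    (fun w hw => fderiv_frame hΩ hG hG1 (hΩr hw) (hdetr w hw))
    (fun w hw => (hasFDerivAt_frame (hGt.contDiffAt (hΩ.mem_nhds (hΩr hw)))).differentiableAt)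
    (fun w hw u => by
      rw [fderiv_frame hΩ hGt hGt1 (hΩr hw) (hdetr' w hw), connection_congr (hform' w (hΩr hw))])
    (mem_ball_self hr) hframe
  filter_upwards [ball_mem_nhds z hr] with w hw using congrFun (hsame hw) 0

lemma lor3c_ofReal (x y : Fin 3 → ℝ) :
    lor3c (fun i => (x i : ℂ)) (fun i => (y i : ℂ)) = lorentz x y := by
  simp [lor3c]

lemma fderiv_cx_apply (hH : DifferentiableAt ℝ H z) (i : Fin 3) (v : ℂ) :
    fderiv ℝ (fun w => cx H w i) z v = fderiv ℝ H z v i := by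
  let π : (Fin 3 → ℝ) →L[ℝ] ℂ := ofRealCLM.comp (proj i)
  have : HasFDerivAt (fun w => cx H w i) (π.comp (fderiv ℝ H z)) z :=
    π.hasFDerivAt.comp z hH.hasFDerivAt
  rw [this.fderiv]
  rfl

lemma wzV_cx (hH : DifferentiableAt ℝ H z) :
    wzV (cx H) z = fun i => ((fderiv ℝ H z 1 i : ℂ) - I * fderiv ℝ H z I i) / 2 := by
  funext i
  simp only [wzV, wz, fderiv_cx_apply hH]

lemma wzbV_cx (hH : DifferentiableAt ℝ H z) :
    wzbV (cx H) z = fun i => ((fderiv ℝ H z 1 i : ℂ) + I * fderiv ℝ H z I i) / 2 := by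
  funext i
  simp only [wzbV, wzb, fderiv_cx_apply hH]

lemma lor3c_wzV_wzV_cx (hH : DifferentiableAt ℝ H z) :
    lor3c (wzV (cx H) z) (wzV (cx H) z)
      = ((firstForm H z 1 1 - firstForm H z I I) / 4 : ℝ) - I * (firstForm H z 1 I / 2 : ℝ) := by
  rw [wzV_cx hH]
  simp only [lor3c, firstForm, lorentz_apply]
  push_cast
  ring_nf
  rw [I_sq]
  ring

lemma lor3c_wzV_wzbV_cx (hH : DifferentiableAt ℝ H z) :
    lor3c (wzV (cx H) z) (wzbV (cx H) z) = ((firstForm H z 1 1 + firstForm H z I I) / 4 : ℝ) := by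
  rw [wzV_cx hH, wzbV_cx hH]
  simp only [lor3c, firstForm, lorentz_apply]
  push_cast
  ring_nf
  rw [I_sq]
  ring

lemma firstForm_apply (H : ℂ → Fin 3 → ℝ) (z v w : ℂ) :
    firstForm H z v w = v.re * w.re * firstForm H z 1 1
      + (v.re * w.im + v.im * w.re) * firstForm H z 1 I + v.im * w.im * firstForm H z I I := by
  simp only [firstForm, (fderiv ℝ H z).apply_eq_re_smul_add_im_smul v,
    (fderiv ℝ H z).apply_eq_re_smul_add_im_smul w, map_add, map_smul, add_apply, smul_apply,
    smul_eq_mul, lorentz_comm (fderiv ℝ H z I) (fderiv ℝ H z 1)]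
  ring

lemma firstForm_eq_of_lor3c_eq {G Gt : ℂ → Fin 3 → ℝ} (hG : DifferentiableAt ℝ G z)
    (hGt : DifferentiableAt ℝ Gt z)
    (hQ : lor3c (wzV (cx G) z) (wzV (cx G) z) = lor3c (wzV (cx Gt) z) (wzV (cx Gt) z))
    (hμ : lor3c (wzV (cx G) z) (wzbV (cx G) z) = lor3c (wzV (cx Gt) z) (wzbV (cx Gt) z)) :
    firstForm G z = firstForm Gt z := by
  rw [lor3c_wzV_wzV_cx hG, lor3c_wzV_wzV_cx hGt, Complex.ext_iff] at hQ
  rw [lor3c_wzV_wzbV_cx hG, lor3c_wzV_wzbV_cx hGt, ofReal_inj] at hμ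
  simp only [sub_re, ofReal_re, mul_re, I_re, zero_mul, I_im, ofReal_im, mul_zero, sub_self,
    sub_zero, sub_im, mul_im, one_mul, zero_add, zero_sub, neg_inj] at hQ
  have h11 : firstForm G z 1 1 = firstForm Gt z 1 1 := by linarith
  have h1I : firstForm G z 1 I = firstForm Gt z 1 I := by linarith
  have hII : firstForm G z I I = firstForm Gt z I I := by linarith
  funext v w
  rw [firstForm_apply G, firstForm_apply Gt, h11, h1I, hII]

lemma frame_eq_of_wzV_eq {G Gt : ℂ → Fin 3 → ℝ} (hG : DifferentiableAt ℝ G z)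
    (hGt : DifferentiableAt ℝ Gt z) (h0 : G z = Gt z) (h1 : wzV (cx G) z = wzV (cx Gt) z) :
    frame G z = frame Gt z := by
  rw [wzV_cx hG, wzV_cx hGt] at h1
  have hre : ∀ i, fderiv ℝ G z 1 i = fderiv ℝ Gt z 1 i := fun i => by
    simpa using congrArg re (congrFun h1 i)
  have him : ∀ i, fderiv ℝ G z I i = fderiv ℝ Gt z I i := fun i => by
    simpa using congrArg im (congrFun h1 i)
  ext1 i
  fin_cases i
  exacts [h0, funext hre, funext him]

lemma gramDet_firstForm_pos (hΩ : IsOpen Ω) (hH : ∀ z ∈ Ω, DifferentiableAt ℝ H z)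
    (hH1 : ∀ z ∈ Ω, lorentz (H z) (H z) = -1) (hz : z ∈ Ω)
    (himm : Function.Injective (fderiv ℝ H z)) : 0 < gramDet (firstForm H) z :=
  lorentz_gram_det_pos (hH1 z hz) (lorentz_fderiv_apply_self hΩ hH hH1 hz 1)
    (lorentz_fderiv_apply_self hΩ hH hH1 hz I) (linearIndependent_apply_one_I himm)

end Surface

end Minkowski

open Minkowski

theorem stmt16_general (Ω : Set ℂ) (hΩ : IsOpen Ω) (hconn : IsConnected Ω)
    (G Gt : ℂ → (Fin 3 → ℝ))
    (hG : AnalyticOnNhd ℝ G Ω) (hGt : AnalyticOnNhd ℝ Gt Ω)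
    (hGH2 : ∀ z ∈ Ω, lor3c (cx G z) (cx G z) = -1 ∧ 0 < G z 0)
    (hGtH2 : ∀ z ∈ Ω, lor3c (cx Gt z) (cx Gt z) = -1 ∧ 0 < Gt z 0)
    (hQ : ∀ z ∈ Ω, lor3c (wzV (cx G) z) (wzV (cx G) z) = lor3c (wzV (cx Gt) z) (wzV (cx Gt) z))
    (hμ : ∀ z ∈ Ω,
      lor3c (wzV (cx G) z) (wzbV (cx G) z) = lor3c (wzV (cx Gt) z) (wzbV (cx Gt) z))
    (z₀ : ℂ) (hz₀ : z₀ ∈ Ω)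
    (himm : Function.Injective (fderiv ℝ G z₀))
    (h0 : G z₀ = Gt z₀) (h1 : wzV (cx G) z₀ = wzV (cx Gt) z₀) :
    Set.EqOn G Gt Ω := by
  have hG1 : ∀ z ∈ Ω, lorentz (G z) (G z) = -1 := fun z hz => by
    exact_mod_cast (lor3c_ofReal (G z) (G z)).symm.trans (hGH2 z hz).1
  have hGt1 : ∀ z ∈ Ω, lorentz (Gt z) (Gt z) = -1 := fun z hz => by
    exact_mod_cast (lor3c_ofReal (Gt z) (Gt z)).symm.trans (hGtH2 z hz).1
  have hdG : ∀ z ∈ Ω, DifferentiableAt ℝ G z := fun z hz => (hG z hz).differentiableAt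
  have hdGt : ∀ z ∈ Ω, DifferentiableAt ℝ Gt z := fun z hz => (hGt z hz).differentiableAt
  have hlocal : G =ᶠ[𝓝 z₀] Gt :=
    eventuallyEq_of_firstForm_eq hΩ (hG.contDiffOn hΩ.uniqueDiffOn)
      (hGt.contDiffOn hΩ.uniqueDiffOn) hG1 hGt1
      (fun z hz => firstForm_eq_of_lor3c_eq (hdG z hz) (hdGt z hz) (hQ z hz) (hμ z hz)) hz₀
      (gramDet_firstForm_pos hΩ hdG hG1 hz₀ himm).ne'
      (frame_eq_of_wzV_eq (hdG z₀ hz₀) (hdGt z₀ hz₀) h0 h1)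
  exact hG.eqOn_of_preconnected_of_eventuallyEq hGt hconn.isPreconnected hz₀ hlocal

/-- Two real-analytic harmonic maps `G, G̃ : Ω → ℍ²` with the same first fundamental form
that agree to first order at a point where `G` is an immersion coincide on connected `Ω`. -/
theorem stmt16 (Ω : Set ℂ) (hΩ : IsOpen Ω) (hconn : IsConnected Ω)
    (G Gt : ℂ → (Fin 3 → ℝ))
    (hG : AnalyticOnNhd ℝ G Ω) (hGt : AnalyticOnNhd ℝ Gt Ω)
    (hGH2 : ∀ z ∈ Ω, lor3c (cx G z) (cx G z) = -1 ∧ 0 < G z 0)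
    (hGtH2 : ∀ z ∈ Ω, lor3c (cx Gt z) (cx Gt z) = -1 ∧ 0 < Gt z 0)
    (hGharm : ∀ z ∈ Ω, ∃ f : ℂ, wzbV (fun w => wzV (cx G) w) z = fun i => f * cx G z i)
    (hGtharm : ∀ z ∈ Ω, ∃ f : ℂ, wzbV (fun w => wzV (cx Gt) w) z = fun i => f * cx Gt z i)
    (hQ : ∀ z ∈ Ω, lor3c (wzV (cx G) z) (wzV (cx G) z) = lor3c (wzV (cx Gt) z) (wzV (cx Gt) z))
    (hμ : ∀ z ∈ Ω,
      lor3c (wzV (cx G) z) (wzbV (cx G) z) = lor3c (wzV (cx Gt) z) (wzbV (cx Gt) z))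
    (z₀ : ℂ) (hz₀ : z₀ ∈ Ω)
    (himm : Function.Injective (fderiv ℝ G z₀))
    (h0 : G z₀ = Gt z₀) (h1 : wzV (cx G) z₀ = wzV (cx Gt) z₀) :
    Set.EqOn G Gt Ω :=
  stmt16_general Ω hΩ hconn G Gt hG hGt hGH2 hGtH2 hQ hμ z₀ hz₀ himm h0 h1
end
end
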